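/- arXiv:2605.12082 — 5 statements merged into one kernel-verified Lean document; each statement's English description precedes it below -/
import Mathlib

section
/- Regarding Pₕ as an operator from H to H via the inclusion V ⊆ H, one has Pₕ ∘ Pₕ = Pₕ if and only if ⟨χ,ψ⟩ₕ = ⟪χ, Qψ⟫ for all χ, ψ ∈ V. Moreover, if V ≠ W as subspaces of H, then Pₕ is not selfadjoint on H; in particular, Pₕ is then never an orthogonal projection of H. -/
open RealInnerProductSpace

/-- Regarding `Pₕ` as an operator `H → H` via the inclusion `V ⊆ H`,
`Pₕ ∘ Pₕ = Pₕ` if and only if `⟨χ,ψ⟩ₕ = ⟪χ, Qψ⟫` for all `χ, ψ ∈ V`.  Moreover, if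
`V ≠ W` as subspaces of `H`, then `Pₕ` is not selfadjoint on `H`; in particular `Pₕ`
is then never an orthogonal projection (idempotent and selfadjoint) of `H`. -/
theorem stmt4
    {H : Type*} [NormedAddCommGroup H] [InnerProductSpace ℝ H]
    (V W : Submodule ℝ H) [FiniteDimensional ℝ V] [FiniteDimensional ℝ W]
    (hdim : Module.finrank ℝ V = Module.finrank ℝ W)
    (Q : V →ₗ[ℝ] H) (hQinj : Function.Injective Q)
    (hQrange : LinearMap.range Q = W)
    (bh : V →ₗ[ℝ] V →ₗ[ℝ] ℝ)
    (bh_symm : ∀ χ ψ : V, bh χ ψ = bh ψ χ)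
    (bh_pos : ∀ χ : V, χ ≠ 0 → 0 < bh χ χ)
    (P : H →ₗ[ℝ] V)
    (hP : ∀ (f : H) (χ : V), bh (P f) χ = ⟪f, Q χ⟫) :
    ((∀ f : H, P ((P f : V) : H) = P f) ↔ (∀ χ ψ : V, bh χ ψ = ⟪(χ : H), Q ψ⟫)) ∧
    (V ≠ W →
      (¬ (∀ f g : H, ⟪f, ((P g : V) : H)⟫ = ⟪((P f : V) : H), g⟫)) ∧
      (¬ ((∀ f : H, P ((P f : V) : H) = P f) ∧
          (∀ f g : H, ⟪f, ((P g : V) : H)⟫ = ⟪((P f : V) : H), g⟫)))) := by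
  classical
  -- definiteness of bh
  have bh_def : ∀ x : V, (∀ χ : V, bh x χ = 0) → x = 0 := by
    intro x hx
    by_contra h
    exact absurd (hx x) (ne_of_gt (bh_pos x h))
  -- P restricted to W is injective
  set Pw : W →ₗ[ℝ] V := P.comp W.subtype with hPwdef
  have hPw_inj : Function.Injective Pw := by
    rw [← LinearMap.ker_eq_bot, LinearMap.ker_eq_bot']
    intro w hw
    have h1 : ∀ χ : V, ⟪(w : H), Q χ⟫ = 0 := by
      intro χ
      have : bh (Pw w) χ = ⟪(w : H), Q χ⟫ := hP (w : H) χ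
      rw [hw] at this
      simpa using this.symm
    have hwW : (w : H) ∈ LinearMap.range Q := by rw [hQrange]; exact w.2
    obtain ⟨χ, hχ⟩ := hwW
    have : ⟪(w : H), (w : H)⟫ = 0 := by have h2 := h1 χ; rwa [hχ] at h2
    have : (w : H) = 0 := inner_self_eq_zero.mp this
    exact Subtype.ext this
  -- P restricted to W is surjective (equal finite dimensions)
  have hPw_surj : Function.Surjective Pw := by
    rw [← LinearMap.range_eq_top]
    apply Submodule.eq_top_of_finrank_eq
    rw [LinearMap.finrank_range_of_inj hPw_inj, hdim]
  have hsurj : ∀ χ : V, ∃ f : H, P f = χ := by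
    intro χ
    obtain ⟨w, hw⟩ := hPw_surj χ
    exact ⟨(w : H), hw⟩
  constructor
  · constructor
    · -- idempotent → bh χ ψ = ⟪χ, Qψ⟫
      intro hid χ ψ
      have hfix : ∀ ρ : V, P ((ρ : V) : H) = ρ := by
        intro ρ
        obtain ⟨f, hf⟩ := hsurj ρ
        rw [← hf, hid f]
      have := hP ((χ : V) : H) ψ
      rw [hfix χ] at this
      exact this
    · -- converse
      intro hb f
      apply eq_of_sub_eq_zero
      apply bh_def
      intro χ
      rw [map_sub, LinearMap.sub_apply]
      have h1 : bh (P ((P f : V) : H)) χ = ⟪((P f : V) : H), Q χ⟫ := hP _ χ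
      have h2 : bh (P f) χ = ⟪((P f : V) : H), Q χ⟫ := hb (P f) χ
      rw [h1, h2, sub_self]
  · intro hne
    have key : ¬ (∀ f g : H, ⟪f, ((P g : V) : H)⟫ = ⟪((P f : V) : H), g⟫) := by
      intro hsa
      apply hne
      -- P vanishes on Wᗮ
      have hP0 : ∀ f : H, f ∈ Wᗮ → P f = 0 := by
        intro f hf
        apply bh_def
        intro χ
        rw [hP f χ, real_inner_comm]
        exact (Submodule.mem_orthogonal W f).mp hf (Q χ) (by rw [← hQrange]; exact ⟨χ, rfl⟩)
      -- range of P lands in W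
      have hPin : ∀ g : H, ((P g : V) : H) ∈ W := by
        intro g
        rw [← Submodule.orthogonal_orthogonal W]
        rw [Submodule.mem_orthogonal]
        intro f hf
        rw [hsa f g, hP0 f hf]
        simp
      -- hence V ≤ W, and equality by dimension count
      apply Submodule.eq_of_le_of_finrank_eq _ hdim
      intro x hx
      obtain ⟨f, hf⟩ := hsurj ⟨x, hx⟩
      have := hPin f
      rw [hf] at this
      exact this
    exact ⟨key, fun h => key h.2⟩
end

section
/- For every β > 0, one has L_Q^{−β} ∘ P_Q = Q⁻¹ ∘ (Q ∘ Tₕ)^β as linear maps from H to V, where Q⁻¹ : W → V is the inverse of Q onto its range (note that (Q ∘ Tₕ)^β maps H into W). In particular, the lumped-mass fractional box discretization L_Q^{−β} ∘ P_Q is determined by the nonfractional box solution operator Tₕ alone. -/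
/-!
Transport `L` along `Q` to the operator `M = Q L Q⁻¹` on `W = range Q`; selfadjointness of `L` for
the lumped-mass inner product is exactly symmetry of `M` for the inner product of `H`. An
orthonormal eigenbasis `Q εᵢ` of `M` then diagonalises everything at once: `L εᵢ = μᵢ εᵢ` with
`μᵢ > 0`, `P (Q εᵢ) = εᵢ`, hence `T (Q εᵢ) = μᵢ⁻¹ εᵢ`, so both `Q L^{-β} P` and `(Q T)^β` send
`Q εᵢ` to `μᵢ^{-β} Q εᵢ`. On `Wᗮ` both vanish, because `P`, hence `T`, does and `0^β = 0`.
-/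

open scoped InnerProductSpace

theorem LinearMap.ext_of_basis_of_orthogonal {𝕜 E F ι : Type*} [RCLike 𝕜] [NormedAddCommGroup E]
    [InnerProductSpace 𝕜 E] [AddCommGroup F] [Module 𝕜 F] {K : Submodule 𝕜 E}
    [K.HasOrthogonalProjection] (b : Module.Basis ι 𝕜 K) {f g : E →ₗ[𝕜] F}
    (hb : ∀ i, f (b i) = g (b i)) (hK : Set.EqOn f g Kᗮ) : f = g :=
  LinearMap.ext_on_codisjoint K.isCompl_orthogonal.codisjoint
    (fun x hx => LinearMap.congr_fun (b.ext (f₁ := f ∘ₗ K.subtype) (f₂ := g ∘ₗ K.subtype) hb)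
      ⟨x, hx⟩) hK

theorem apply_eq_inv_smul_of_apply_eq_smul {K V α : Type*} [Field K] [AddCommGroup V]
    [Module K V] {L : V →ₗ[K] V} (hL : Function.Injective L) {P T : α → V}
    (hT : ∀ f, L (T f) = P f) {f : α} {χ : V} (hf : P f = χ) {μ : K} (hμ : μ ≠ 0)
    (h : L χ = μ • χ) : T f = μ⁻¹ • χ :=
  hL <| by rw [hT, hf, map_smul, h, smul_smul, inv_mul_cancel₀ hμ, one_smul]

section LumpedMass

variable {𝕜 E V : Type*} [RCLike 𝕜] [NormedAddCommGroup E] [InnerProductSpace 𝕜 E]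
  [AddCommGroup V] [Module 𝕜 V] {Q : V →ₗ[𝕜] E}

theorem eq_zero_of_forall_inner_map_eq_zero (hQ : Function.Injective Q) {χ : V}
    (h : ∀ ψ, ⟪Q χ, Q ψ⟫_𝕜 = 0) : χ = 0 :=
  hQ <| by rw [map_zero]; exact inner_self_eq_zero.mp (h χ)

theorem leftInverse_of_inner_map_eq (hQ : Function.Injective Q) {P : E → V}
    (hP : ∀ f χ, ⟪Q (P f), Q χ⟫_𝕜 = ⟪f, Q χ⟫_𝕜) : Function.LeftInverse P Q := fun χ =>
  sub_eq_zero.mp <| eq_zero_of_forall_inner_map_eq_zero hQ fun ψ => by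
    rw [map_sub, inner_sub_left, hP, sub_self]

theorem eq_zero_of_mem_orthogonal_range (hQ : Function.Injective Q) {P : E → V}
    (hP : ∀ f χ, ⟪Q (P f), Q χ⟫_𝕜 = ⟪f, Q χ⟫_𝕜) {f : E} (hf : f ∈ (LinearMap.range Q)ᗮ) :
    P f = 0 :=
  eq_zero_of_forall_inner_map_eq_zero hQ fun ψ => by
    rw [hP]; exact Submodule.inner_left_of_mem_orthogonal (LinearMap.mem_range_self Q ψ) hf

theorem injective_of_re_inner_pos {L : V →ₗ[𝕜] V}
    (hL : ∀ χ, χ ≠ 0 → 0 < RCLike.re ⟪Q (L χ), Q χ⟫_𝕜) : Function.Injective L := by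
  refine (injective_iff_map_eq_zero L).mpr fun χ h => ?_
  by_contra hχ
  simpa [h] using hL χ hχ

theorem pos_of_apply_eq_smul_of_re_inner_pos {L : V →ₗ[𝕜] V}
    (hL : ∀ χ, χ ≠ 0 → 0 < RCLike.re ⟪Q (L χ), Q χ⟫_𝕜) {χ : V} (hχ : χ ≠ 0) {μ : ℝ}
    (h : L χ = (μ : 𝕜) • χ) : 0 < μ := by
  have hpos := hL χ hχ
  rw [h, map_smul, inner_smul_left, RCLike.conj_ofReal, inner_self_eq_norm_sq_to_K,
    ← RCLike.ofReal_pow, ← RCLike.ofReal_mul, RCLike.ofReal_re] at hpos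
  exact pos_of_mul_pos_left hpos (by positivity)

theorem exists_orthonormalBasis_range_eigenvectors [FiniteDimensional 𝕜 V]
    (hQ : Function.Injective Q) {L : V →ₗ[𝕜] V}
    (hL : ∀ χ ψ, ⟪Q (L χ), Q ψ⟫_𝕜 = ⟪Q χ, Q (L ψ)⟫_𝕜) :
    ∃ (n : ℕ) (b : OrthonormalBasis (Fin n) 𝕜 (LinearMap.range Q)) (ε : Fin n → V)
      (μ : Fin n → ℝ), ∀ i, Q (ε i) = b i ∧ L (ε i) = (μ i : 𝕜) • ε i := by
  let e := LinearEquiv.ofInjective Q hQ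
  have he : ∀ χ, (e χ : E) = Q χ := fun _ => rfl
  have he_symm : ∀ w, Q (e.symm w) = w := fun w => congrArg Subtype.val (e.apply_symm_apply w)
  have hM : (e.conj L).IsSymmetric := fun x y => by
    simpa only [LinearEquiv.conj_apply_apply, Submodule.coe_inner, he, he_symm]
      using hL (e.symm x) (e.symm y)
  refine ⟨_, hM.eigenvectorBasis rfl, fun i => e.symm (hM.eigenvectorBasis rfl i),
    hM.eigenvalues rfl, fun i => ⟨he_symm _, ?_⟩⟩
  have h := congrArg e.symm (hM.apply_eigenvectorBasis rfl i)
  rwa [LinearEquiv.conj_apply_apply, e.symm_apply_apply, map_smul] at h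

end LumpedMass

open ComplexInnerProductSpace

theorem stmt7_general
    {H : Type*} [NormedAddCommGroup H] [InnerProductSpace ℂ H]
    (V : Submodule ℂ H) [FiniteDimensional ℂ V]
    (Q : V →ₗ[ℂ] H) (hQinj : Function.Injective Q)
    (L : V →ₗ[ℂ] V)
    (hL_herm : ∀ χ ψ : V, ⟪Q (L χ), Q ψ⟫ = ⟪Q χ, Q (L ψ)⟫)
    (hL_pos : ∀ χ : V, χ ≠ 0 → 0 < (⟪Q (L χ), Q χ⟫).re)
    (P : H →ₗ[ℂ] V)
    (hP : ∀ (f : H) (χ : V), ⟪Q (P f), Q χ⟫ = ⟪f, Q χ⟫)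
    (T : H →ₗ[ℂ] V) (hT : ∀ f : H, L (T f) = P f)
    (β : ℝ) (hβ : 0 < β)
    (Lnegβ : V →ₗ[ℂ] V)
    (hLnegβ : ∀ (μ : ℝ) (χ : V), L χ = (μ : ℂ) • χ → Lnegβ χ = ((μ ^ (-β) : ℝ) : ℂ) • χ)
    (Sβ : H →ₗ[ℂ] H)
    (hSβ : ∀ (μ : ℝ) (f : H), Q (T f) = (μ : ℂ) • f → Sβ f = ((μ ^ β : ℝ) : ℂ) • f) :
    ∀ f : H, (Q (Lnegβ (P f)) : H) = Sβ f := by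
  have hPQ := leftInverse_of_inner_map_eq hQinj hP
  have hLinj := injective_of_re_inner_pos (𝕜 := ℂ) hL_pos
  obtain ⟨n, b, ε, μ, hε⟩ := exists_orthonormalBasis_range_eigenvectors hQinj hL_herm
  suffices h : Q ∘ₗ Lnegβ ∘ₗ P = Sβ from LinearMap.congr_fun h
  refine LinearMap.ext_of_basis_of_orthogonal b.toBasis (fun i => ?_) (fun f hf => ?_)
  · have hQε : Q (ε i) = b i := (hε i).1
    have hLε : L (ε i) = (μ i : ℂ) • ε i := (hε i).2
    have hε_ne : ε i ≠ 0 := fun h0 => b.orthonormal.ne_zero i (Subtype.ext (by simp [← hQε, h0]))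
    have hμ := pos_of_apply_eq_smul_of_re_inner_pos (𝕜 := ℂ) hL_pos hε_ne hLε
    have hTε : Q (T (Q (ε i))) = (((μ i)⁻¹ : ℝ) : ℂ) • Q (ε i) := by
      rw [apply_eq_inv_smul_of_apply_eq_smul hLinj hT (hPQ _) (by exact_mod_cast hμ.ne') hLε,
        map_smul, Complex.ofReal_inv]
    rw [OrthonormalBasis.coe_toBasis, ← hQε, LinearMap.comp_apply, LinearMap.comp_apply, hPQ,
      hLnegβ _ _ hLε, hSβ _ _ hTε, map_smul, Real.inv_rpow hμ.le, Real.rpow_neg hμ.le]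
  · have hPf := eq_zero_of_mem_orthogonal_range hQinj hP hf
    have hTf : T f = 0 := hLinj (by rw [hT, hPf, map_zero])
    have hQTf : Q (T f) = ((0 : ℝ) : ℂ) • f := by
      rw [hTf, map_zero, Complex.ofReal_zero, zero_smul]
    rw [LinearMap.comp_apply, LinearMap.comp_apply, hPf, hSβ 0 f hQTf, map_zero, map_zero,
      Real.zero_rpow hβ.ne', Complex.ofReal_zero, zero_smul]

/-- Lumped-mass characterization of the fractional box discretization.
`H` is a complex Hilbert space, `V, W` finite-dimensional subspaces of equal dimension,
`Q : V → H` injective with range `W`.  `V` carries the lumped-mass inner product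
`⟨χ,ψ⟩_Q = ⟪Qχ, Qψ⟫`.  `L` is the discrete operator, positive and selfadjoint for
`⟨·,·⟩_Q` (these properties are expressed through `Q`), `P` the lumped-mass load
operator with `⟨P f, χ⟩_Q = ⟪f, Qχ⟫`, and `T = L⁻¹ ∘ P` the nonfractional box solution
operator.  For `β > 0`, `Lnegβ = L^{-β}` is the spectral fractional power of `L` on
`(V, ⟨·,·⟩_Q)` (characterized on eigenvectors by `μ ↦ μ^{-β}`) and
`Sβ = (Q ∘ T)^β` the continuous-functional-calculus power of the nonnegative
selfadjoint finite-rank operator `Q ∘ T` on `H` (characterized on eigenvectors by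
`μ ↦ μ^β`, vanishing on the kernel).  Then `L^{-β} ∘ P = Q⁻¹ ∘ (Q ∘ T)^β`, i.e.
`Q (L^{-β} (P f)) = (Q ∘ T)^β f` for all `f ∈ H`; in particular `(Q ∘ T)^β` maps `H`
into `W` and the lumped-mass fractional box discretization is determined by `T` alone. -/
theorem stmt7
    {H : Type*} [NormedAddCommGroup H] [InnerProductSpace ℂ H]
    (V W : Submodule ℂ H) [FiniteDimensional ℂ V] [FiniteDimensional ℂ W]
    (hdim : Module.finrank ℂ V = Module.finrank ℂ W)
    (Q : V →ₗ[ℂ] H) (hQinj : Function.Injective Q)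
    (hQrange : LinearMap.range Q = W)
    (L : V →ₗ[ℂ] V)
    (hL_herm : ∀ χ ψ : V, ⟪Q (L χ), Q ψ⟫ = ⟪Q χ, Q (L ψ)⟫)
    (hL_pos : ∀ χ : V, χ ≠ 0 → 0 < (⟪Q (L χ), Q χ⟫).re)
    (P : H →ₗ[ℂ] V)
    (hP : ∀ (f : H) (χ : V), ⟪Q (P f), Q χ⟫ = ⟪f, Q χ⟫)
    (T : H →ₗ[ℂ] V) (hT : ∀ f : H, L (T f) = P f)
    (β : ℝ) (hβ : 0 < β)
    (Lnegβ : V →ₗ[ℂ] V)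
    (hLnegβ : ∀ (μ : ℝ) (χ : V), L χ = (μ : ℂ) • χ → Lnegβ χ = ((μ ^ (-β) : ℝ) : ℂ) • χ)
    (Sβ : H →ₗ[ℂ] H)
    (hSβ : ∀ (μ : ℝ) (f : H), Q (T f) = (μ : ℂ) • f → Sβ f = ((μ ^ β : ℝ) : ℂ) • f) :
    ∀ f : H, (Q (Lnegβ (P f)) : H) = Sβ f :=
  stmt7_general V Q hQinj L hL_herm hL_pos P hP T hT β hβ Lnegβ hLnegβ Sβ hSβ
end

section
/- Suppose ûₕ, ũₕ ∈ Vₕ satisfy the Galerkin equations a(ûₕ, χ) = f(χ) and aₕ(ũₕ, χ) = f(χ) for all χ ∈ Vₕ. Then ‖ũₕ‖ ≤ ‖f‖/(α − ε) and ‖ûₕ − ũₕ‖ ≤ (ε/α)‖ũₕ‖, hence ‖ûₕ − ũₕ‖ ≤ ε‖f‖/(α(α − ε)). (This is the abstract core of the paper's lemma comparing the exact-form and perturbed-form Galerkin solutions, yielding ‖ûₕ − ũₕ‖ ≲ h²‖f‖ when the form-consistency defect is ε ≲ h².) -/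
/-- Abstract comparison of exact-form and perturbed-form Galerkin
solutions.  `X` is a real Hilbert space, `Vₕ ⊆ X` a finite-dimensional subspace,
`a` a bounded coercive bilinear form with coercivity constant `α` and bound `M_a`,
`aₕ` a bilinear form on `Vₕ` with `|a(χ,ψ) − aₕ(χ,ψ)| ≤ ε‖χ‖‖ψ‖` for `0 ≤ ε < α`,
and `f` a bounded linear functional.  If `a(ûₕ, χ) = f(χ)` and `aₕ(ũₕ, χ) = f(χ)`
for all `χ ∈ Vₕ`, then `‖ũₕ‖ ≤ ‖f‖/(α − ε)`, `‖ûₕ − ũₕ‖ ≤ (ε/α)‖ũₕ‖`, and hence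
`‖ûₕ − ũₕ‖ ≤ ε‖f‖/(α(α − ε))`. -/
theorem stmt9
    {X : Type*} [NormedAddCommGroup X] [InnerProductSpace ℝ X] [CompleteSpace X]
    (Vh : Submodule ℝ X) [FiniteDimensional ℝ Vh]
    (a : X →ₗ[ℝ] X →ₗ[ℝ] ℝ) (α Ma : ℝ) (hα : 0 < α) (hMa : 0 < Ma)
    (ha_coer : ∀ v : X, α * ‖v‖ ^ 2 ≤ a v v)
    (ha_bdd : ∀ u v : X, |a u v| ≤ Ma * ‖u‖ * ‖v‖)
    (ah : Vh →ₗ[ℝ] Vh →ₗ[ℝ] ℝ)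
    (ε : ℝ) (hε0 : 0 ≤ ε) (hεα : ε < α)
    (hconsist : ∀ χ ψ : Vh, |a (χ : X) (ψ : X) - ah χ ψ| ≤ ε * ‖(χ : X)‖ * ‖(ψ : X)‖)
    (f : X →L[ℝ] ℝ)
    (uhat utilde : Vh)
    (hhat : ∀ χ : Vh, a (uhat : X) (χ : X) = f (χ : X))
    (htilde : ∀ χ : Vh, ah utilde χ = f (χ : X)) :
    ‖(utilde : X)‖ ≤ ‖f‖ / (α - ε) ∧
    ‖(uhat : X) - (utilde : X)‖ ≤ (ε / α) * ‖(utilde : X)‖ ∧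
    ‖(uhat : X) - (utilde : X)‖ ≤ ε * ‖f‖ / (α * (α - ε)) := by
  have hαε : 0 < α - ε := by linarith
  set t := ‖(utilde : X)‖ with ht
  have htnn : 0 ≤ t := norm_nonneg _
  -- Step 1: bound on ‖utilde‖
  have key1 : (α - ε) * t ^ 2 ≤ ‖f‖ * t := by
    have h1 : α * t ^ 2 ≤ a (utilde : X) (utilde : X) := ha_coer _
    have h2 : a (utilde : X) (utilde : X) - ah utilde utilde ≤ ε * t * t :=
      le_trans (le_abs_self _) (hconsist utilde utilde)
    have h3 : ah utilde utilde = f (utilde : X) := htilde utilde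
    have h4 : f (utilde : X) ≤ ‖f‖ * t := le_trans (le_abs_self _)
      (by simpa [Real.norm_eq_abs] using f.le_opNorm (utilde : X))
    nlinarith
  have hut : t ≤ ‖f‖ / (α - ε) := by
    rcases eq_or_lt_of_le htnn with h | h
    · rw [← h]; positivity
    · rw [le_div_iff₀ hαε]
      nlinarith
  -- Step 2
  set e : Vh := uhat - utilde with he
  have hec : (e : X) = (uhat : X) - (utilde : X) := rfl
  set s := ‖(e : X)‖ with hs
  have hsnn : 0 ≤ s := norm_nonneg _
  have key2 : α * s ^ 2 ≤ ε * t * s := by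
    have h1 : α * s ^ 2 ≤ a (e : X) (e : X) := ha_coer _
    have h2 : a (e : X) (e : X) = f (e : X) - a (utilde : X) (e : X) := by
      rw [hec]
      have := hhat e
      rw [hec] at this
      simp only [map_sub, LinearMap.sub_apply] at this ⊢
      linarith
    have h3 : f (e : X) = ah utilde e := (htilde e).symm
    have h4 : ah utilde e - a (utilde : X) (e : X) ≤ ε * t * s := by
      have := hconsist utilde e
      have := neg_abs_le (a (utilde : X) (e : X) - ah utilde e)
      linarith [abs_le.mp (hconsist utilde e)]
    linarith
  have hes : s ≤ (ε / α) * t := by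
    rcases eq_or_lt_of_le hsnn with h | h
    · rw [← h]; positivity
    · rw [div_mul_eq_mul_div, le_div_iff₀ hα]
      nlinarith
  refine ⟨hut, hes, ?_⟩
  calc s ≤ (ε / α) * t := hes
    _ ≤ (ε / α) * (‖f‖ / (α - ε)) := by
        apply mul_le_mul_of_nonneg_left hut (by positivity)
    _ = ε * ‖f‖ / (α * (α - ε)) := by field_simp
end

section
/- For every ψ ∈ E, the element ξ := (L₁⁻¹ − L₂⁻¹)ψ satisfies a(ξ, ξ) ≤ ε² a(ψ, ψ). (Equivalently, in the notation of the paper, ‖L̃ₕ^{1/2}(L̃ₕ⁻¹ − Lₕ⁻¹)ψ‖ ≤ ε ‖Lₕ^{1/2}ψ‖ₕ; this is the key inner-product perturbation estimate in the proof of the fractional finite element error bound.) -/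
/-- Key inner-product perturbation estimate.  Let `E` be a
finite-dimensional real vector space, `a` a symmetric positive definite bilinear
form, `⟨·,·⟩₁, ⟨·,·⟩₂` two inner products on `E`, and `Lᵢ : E ≃ E` the (invertible)
operators with `⟨Lᵢχ, ψ⟩ᵢ = a(χ,ψ)`.  If `|⟨u,v⟩₁ − ⟨u,v⟩₂| ≤ ε √(a(u,u)) √(a(v,v))`
for all `u, v`, then for every `ψ ∈ E` the element `ξ = (L₁⁻¹ − L₂⁻¹)ψ` satisfies
`a(ξ, ξ) ≤ ε² a(ψ, ψ)`. -/
theorem stmt10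
    {E : Type*} [AddCommGroup E] [Module ℝ E] [FiniteDimensional ℝ E]
    (a : E →ₗ[ℝ] E →ₗ[ℝ] ℝ)
    (ha_symm : ∀ x y : E, a x y = a y x) (ha_pos : ∀ x : E, x ≠ 0 → 0 < a x x)
    (b₁ b₂ : E →ₗ[ℝ] E →ₗ[ℝ] ℝ)
    (hb₁_symm : ∀ x y : E, b₁ x y = b₁ y x) (hb₁_pos : ∀ x : E, x ≠ 0 → 0 < b₁ x x)
    (hb₂_symm : ∀ x y : E, b₂ x y = b₂ y x) (hb₂_pos : ∀ x : E, x ≠ 0 → 0 < b₂ x x)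
    (L₁ L₂ : E ≃ₗ[ℝ] E)
    (hL₁ : ∀ χ ψ : E, b₁ (L₁ χ) ψ = a χ ψ)
    (hL₂ : ∀ χ ψ : E, b₂ (L₂ χ) ψ = a χ ψ)
    (ε : ℝ) (hε : 0 ≤ ε)
    (hpert : ∀ u v : E, |b₁ u v - b₂ u v| ≤ ε * Real.sqrt (a u u) * Real.sqrt (a v v)) :
    ∀ ψ : E, a (L₁.symm ψ - L₂.symm ψ) (L₁.symm ψ - L₂.symm ψ) ≤ ε ^ 2 * a ψ ψ := by
  intro ψ
  set ξ := L₁.symm ψ - L₂.symm ψ with hξ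
  have haψ : 0 ≤ a ψ ψ := by
    rcases eq_or_ne ψ 0 with h | h
    · simp [h]
    · exact (ha_pos ψ h).le
  rcases eq_or_ne ξ 0 with h0 | h0
  · rw [h0]
    simp
    positivity
  have haξ : 0 ≤ a ξ ξ := (ha_pos ξ h0).le
  -- key: a ξ χ = b₁ ψ χ - b₂ ψ χ
  have key : a ξ ξ = b₁ ψ ξ - b₂ ψ ξ := by
    have e1 : a (L₁.symm ψ) = b₁ ψ := by
      ext χ
      have := hL₁ (L₁.symm ψ) χ
      rw [L₁.apply_symm_apply] at this
      exact this.symm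
    have e2 : a (L₂.symm ψ) = b₂ ψ := by
      ext χ
      have := hL₂ (L₂.symm ψ) χ
      rw [L₂.apply_symm_apply] at this
      exact this.symm
    have e3 : a ξ = b₁ ψ - b₂ ψ := by rw [hξ, map_sub, e1, e2]
    rw [e3, LinearMap.sub_apply]
  have hbound : a ξ ξ ≤ ε * Real.sqrt (a ψ ψ) * Real.sqrt (a ξ ξ) := by
    calc a ξ ξ = b₁ ψ ξ - b₂ ψ ξ := key
      _ ≤ |b₁ ψ ξ - b₂ ψ ξ| := le_abs_self _
      _ ≤ ε * Real.sqrt (a ψ ψ) * Real.sqrt (a ξ ξ) := hpert ψ ξ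
  have hsq : Real.sqrt (a ξ ξ) ^ 2 ≤ ε * Real.sqrt (a ψ ψ) * Real.sqrt (a ξ ξ) := by
    rwa [Real.sq_sqrt haξ]
  have hξpos : 0 < Real.sqrt (a ξ ξ) := Real.sqrt_pos.mpr (ha_pos ξ h0)
  have h1 : Real.sqrt (a ξ ξ) ≤ ε * Real.sqrt (a ψ ψ) := by
    have := hsq
    rw [pow_two] at this
    nlinarith
  calc a ξ ξ = Real.sqrt (a ξ ξ) ^ 2 := (Real.sq_sqrt haξ).symm
    _ ≤ (ε * Real.sqrt (a ψ ψ)) ^ 2 := by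
        apply pow_le_pow_left₀ hξpos.le h1
    _ = ε ^ 2 * a ψ ψ := by rw [mul_pow, Real.sq_sqrt haψ]
end

section
/- If M is symmetric with nonnegative entries and positive definite, then 0 ≺ M ⪯ M_i ⪯ L(M); that is, M_i − M and L(M) − M_i are positive semidefinite and M_i is positive definite. (This is the matrix chain underlying the admissibility of the banded family of inner products M_i interpolating between the exact mass matrix M and the lumped mass matrix L(M).) -/
/-!
Write `M = D_i + R_i`. Since `L` is additive, `M_i - M = L(R_i) - R_i` and
`L(M) - M_i = L(D_i) - D_i`, and both `D_i` and `R_i` are symmetric with nonnegative entries.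
For such a matrix `A`, `L(A) - A` is a weighted graph Laplacian: its quadratic form is
`½ Σ_{j,k} A_{jk} (x_j - x_k)² ≥ 0`. Finally `M_i = M + (M_i - M)` is positive definite
as the sum of a positive definite and a positive semidefinite matrix.
-/

open Matrix

/-- The mass-lumping operator: `L(A)` is the diagonal matrix whose diagonal entries
are the row sums of `A`, i.e. `L(A)_{mk} = δ_{mk} Σ_j A_{mj}`. -/
noncomputable def lumpMat {n : ℕ} (A : Matrix (Fin n) (Fin n) ℝ) :
    Matrix (Fin n) (Fin n) ℝ :=
  Matrix.diagonal (fun m => ∑ j, A m j)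

/-- The part of `M` within bandwidth `i`: `(D_i)_{jk} = M_{jk}` if `|j − k| ≤ i`,
and `0` otherwise. -/
noncomputable def bandPart {n : ℕ} (i : ℕ) (M : Matrix (Fin n) (Fin n) ℝ) :
    Matrix (Fin n) (Fin n) ℝ :=
  Matrix.of fun j k => if |(j : ℤ) - (k : ℤ)| ≤ (i : ℤ) then M j k else 0

/-- The banded lumped mass matrix `M_i = D_i + L(R_i)` where `M = D_i + R_i`. -/
noncomputable def bandedLumpMat {n : ℕ} (i : ℕ) (M : Matrix (Fin n) (Fin n) ℝ) :
    Matrix (Fin n) (Fin n) ℝ :=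
  bandPart i M + lumpMat (M - bandPart i M)

lemma lumpMat_add {n : ℕ} (A B : Matrix (Fin n) (Fin n) ℝ) :
    lumpMat (A + B) = lumpMat A + lumpMat B := by
  simp only [lumpMat, diagonal_add, Matrix.add_apply, Finset.sum_add_distrib]

lemma two_mul_dotProduct_lumpMat_sub_mulVec {n : ℕ} {A : Matrix (Fin n) (Fin n) ℝ}
    (hA : A.IsSymm) (x : Fin n → ℝ) :
    2 * (x ⬝ᵥ ((lumpMat A - A) *ᵥ x)) = ∑ j, ∑ k, A j k * (x j - x k) ^ 2 := by
  have hswap : ∑ j, ∑ k, A j k * x k ^ 2 = ∑ j, ∑ k, A j k * x j ^ 2 := by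
    rw [Finset.sum_comm]
    simp only [hA.apply]
  have hform : x ⬝ᵥ ((lumpMat A - A) *ᵥ x) =
      ∑ j, ∑ k, (A j k * x j ^ 2 - A j k * x j * x k) := by
    rw [sub_mulVec, dotProduct_sub, lumpMat]
    simp only [dotProduct, mulVec_diagonal, Finset.sum_mul]
    simp only [mulVec, dotProduct, Finset.mul_sum, ← Finset.sum_sub_distrib]
    exact Finset.sum_congr rfl fun j _ => Finset.sum_congr rfl fun k _ => by ring
  calc 2 * (x ⬝ᵥ ((lumpMat A - A) *ᵥ x))
      = ∑ j, ∑ k, A j k * x j ^ 2 + ∑ j, ∑ k, A j k * x k ^ 2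
          - 2 * ∑ j, ∑ k, A j k * x j * x k := by
        rw [hform, hswap]; simp only [Finset.sum_sub_distrib]; ring
    _ = ∑ j, ∑ k, A j k * (x j - x k) ^ 2 := by
        simp only [Finset.mul_sum, ← Finset.sum_add_distrib, ← Finset.sum_sub_distrib]
        exact Finset.sum_congr rfl fun j _ => Finset.sum_congr rfl fun k _ => by ring

lemma posSemidef_lumpMat_sub {n : ℕ} {A : Matrix (Fin n) (Fin n) ℝ} (hA : A.IsSymm)
    (hA₀ : ∀ j k, 0 ≤ A j k) : (lumpMat A - A).PosSemidef := by
  refine posSemidef_iff_dotProduct_mulVec.2 ⟨?_, fun x => ?_⟩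
  · exact (isHermitian_diagonal _).sub (isHermitian_iff_isSymm.2 hA)
  · have hsq : 0 ≤ ∑ j, ∑ k, A j k * (x j - x k) ^ 2 :=
      Finset.sum_nonneg fun j _ => Finset.sum_nonneg fun k _ =>
        mul_nonneg (hA₀ j k) (sq_nonneg _)
    rw [star_trivial]
    linarith [two_mul_dotProduct_lumpMat_sub_mulVec hA x]

section bandPart

variable {n : ℕ} (i : ℕ) {M : Matrix (Fin n) (Fin n) ℝ}

lemma isSymm_bandPart (hM : M.IsSymm) : (bandPart i M).IsSymm := by
  ext j k
  simp only [bandPart, transpose_apply, of_apply, abs_sub_comm (k : ℤ), hM.apply]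

lemma bandPart_nonneg (hM : ∀ j k, 0 ≤ M j k) (j k : Fin n) : 0 ≤ bandPart i M j k := by
  simp only [bandPart, of_apply]
  split_ifs
  exacts [hM j k, le_rfl]

lemma sub_bandPart_nonneg (hM : ∀ j k, 0 ≤ M j k) (j k : Fin n) :
    0 ≤ (M - bandPart i M) j k := by
  simp only [bandPart, Matrix.sub_apply, of_apply]
  split_ifs
  exacts [(sub_self _).ge, by simpa using hM j k]

end bandPart

lemma bandedLumpMat_sub_self {n : ℕ} (i : ℕ) (M : Matrix (Fin n) (Fin n) ℝ) :
    bandedLumpMat i M - M = lumpMat (M - bandPart i M) - (M - bandPart i M) := by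
  rw [bandedLumpMat]; abel

lemma lumpMat_sub_bandedLumpMat {n : ℕ} (i : ℕ) (M : Matrix (Fin n) (Fin n) ℝ) :
    lumpMat M - bandedLumpMat i M = lumpMat (bandPart i M) - bandPart i M := by
  have hsplit := lumpMat_add (bandPart i M) (M - bandPart i M)
  rw [add_sub_cancel] at hsplit
  rw [hsplit, bandedLumpMat]
  abel

theorem stmt15_general (n : ℕ) (i : ℕ)
    (M : Matrix (Fin n) (Fin n) ℝ)
    (hsymm : M.IsSymm) (hnonneg : ∀ j k, 0 ≤ M j k) (hpos : M.PosDef) :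
    (bandedLumpMat i M - M).PosSemidef ∧
    (lumpMat M - bandedLumpMat i M).PosSemidef ∧
    (bandedLumpMat i M).PosDef := by
  have hle : (bandedLumpMat i M - M).PosSemidef := by
    rw [bandedLumpMat_sub_self]
    exact posSemidef_lumpMat_sub (hsymm.sub (isSymm_bandPart i hsymm))
      (sub_bandPart_nonneg i hnonneg)
  refine ⟨hle, ?_, ?_⟩
  · rw [lumpMat_sub_bandedLumpMat]
    exact posSemidef_lumpMat_sub (isSymm_bandPart i hsymm) (bandPart_nonneg i hnonneg)
  · simpa only [add_sub_cancel] using hpos.add_posSemidef hle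

/-- If `M` is symmetric with nonnegative entries and positive
definite, then `0 ≺ M ⪯ M_i ⪯ L(M)`: the matrices `M_i − M` and `L(M) − M_i` are
positive semidefinite and `M_i` is positive definite. -/
theorem stmt15 (n : ℕ) (hn : 1 ≤ n) (i : ℕ) (hi : i ≤ n - 1)
    (M : Matrix (Fin n) (Fin n) ℝ)
    (hsymm : M.IsSymm) (hnonneg : ∀ j k, 0 ≤ M j k) (hpos : M.PosDef) :
    (bandedLumpMat i M - M).PosSemidef ∧
    (lumpMat M - bandedLumpMat i M).PosSemidef ∧
    (bandedLumpMat i M).PosDef :=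
  stmt15_general n i M hsymm hnonneg hpos
end
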